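/- arXiv:2002.01906 — 3 statements merged into one kernel-verified Lean document; each statement's English description precedes it below -/
import Mathlib

section
/- A point (r,s) ∈ (ℝ/ℤ)² has finite orbit under the right action of a finite-index subgroup G ≤ SL₂(ℤ) if and only if (r,s) ∈ (ℚ/ℤ)². -/
/-!
A finite-index subgroup of `SL(2, ℤ)` contains powers `T ^ m` and `(Tᵀ) ^ n` of both elementary
unipotents. Since `T ^ (m * k)` moves `(r, s)` to `(r, (m * k) • r + s)`, a finite orbit forces
`m • r`, hence `r`, to be torsion; `Tᵀ` does the same for `s`. Conversely, if `r` and `s` are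
torsion, the orbit lies in the finite set `(⟨r⟩ + ⟨s⟩)²`. On `ℝ/ℤ` the torsion points are exactly
the rational ones.
-/

open Matrix Matrix.SpecialLinearGroup ModularGroup
open scoped MatrixGroups Pointwise

theorem isOfFinAddOrder_of_finite_range_nsmul_add {A : Type*} [AddCancelMonoid A] {x y : A}
    (h : (Set.range fun k : ℕ => k • x + y).Finite) : IsOfFinAddOrder x := by
  by_contra hx
  have hinj : Function.Injective fun k : ℕ => k • x + y :=
    (add_left_injective y).comp (injective_nsmul_iff_not_isOfFinAddOrder.mpr hx)
  exact Set.infinite_range_of_injective hinj h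

theorem AddCircle.isOfFinAddOrder_iff_exists_rat {p : ℝ} [Fact (0 < p)] (x : AddCircle p) :
    IsOfFinAddOrder x ↔ ∃ q : ℚ, x = ((q * p : ℝ) : AddCircle p) := by
  have hp : p ≠ 0 := (Fact.out : 0 < p).ne'
  obtain ⟨a, rfl⟩ := QuotientAddGroup.mk_surjective x
  refine ⟨fun h => ?_, fun ⟨q, hq⟩ => ?_⟩
  · obtain ⟨q, hq⟩ := AddCircle.isOfFinAddOrder_iff_exists_rat_eq_div.mp h
    exact ⟨q, by rw [hq, div_mul_cancel₀ _ hp]⟩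
  · change IsOfFinAddOrder (a : AddCircle p)
    rw [hq, AddCircle.isOfFinAddOrder_iff_exists_rat_eq_div]
    exact ⟨q, by rw [mul_div_cancel_right₀ _ hp]⟩

theorem ModularGroup.coe_T_pow (n : ℕ) :
    (↑(T ^ n) : Matrix (Fin 2) (Fin 2) ℤ) = !![1, (n : ℤ); 0, 1] := by
  rw [← zpow_natCast, coe_T_zpow]

theorem ModularGroup.coe_transpose_T_pow (n : ℕ) :
    (↑(Tᵀ ^ n) : Matrix (Fin 2) (Fin 2) ℤ) = !![1, 0; (n : ℤ), 1] := by
  rw [coe_pow, coe_transpose, ← transpose_pow, ← coe_pow, coe_T_pow]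
  ext i j
  fin_cases i <;> fin_cases j <;> rfl

section RowAction

variable {A : Type*} [AddCommGroup A]

def rowSMul (g : SL(2, ℤ)) (p : A × A) : A × A :=
  (g 0 0 • p.1 + g 1 0 • p.2, g 0 1 • p.1 + g 1 1 • p.2)

def rowOrbit (G : Subgroup SL(2, ℤ)) (p : A × A) : Set (A × A) :=
  {q | ∃ g, g ∈ G ∧ q = rowSMul g p}

theorem rowSMul_T_pow (n : ℕ) (p : A × A) : rowSMul (T ^ n) p = (p.1, n • p.1 + p.2) := by
  rw [rowSMul, coe_T_pow]
  simp

theorem rowSMul_transpose_T_pow (n : ℕ) (p : A × A) :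
    rowSMul (Tᵀ ^ n) p = (p.1 + n • p.2, p.2) := by
  rw [rowSMul, coe_transpose_T_pow]
  simp

theorem rowOrbit_finite_of_isOfFinAddOrder (G : Subgroup SL(2, ℤ)) {p : A × A}
    (h₁ : IsOfFinAddOrder p.1) (h₂ : IsOfFinAddOrder p.2) : (rowOrbit G p).Finite := by
  set S : Set A := (AddSubgroup.zmultiples p.1 : Set A) + (AddSubgroup.zmultiples p.2 : Set A)
  have hS : S.Finite := h₁.finite_zmultiples.add h₂.finite_zmultiples
  have hmem (a b : ℤ) : a • p.1 + b • p.2 ∈ S :=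
    Set.add_mem_add (AddSubgroup.zsmul_mem_zmultiples _ _) (AddSubgroup.zsmul_mem_zmultiples _ _)
  refine (hS.prod hS).subset ?_
  rintro _ ⟨g, -, rfl⟩
  exact ⟨hmem _ _, hmem _ _⟩

theorem exists_finite_range_rowSMul_pow {G : Subgroup SL(2, ℤ)} (hG : G.FiniteIndex) {p : A × A}
    (h : (rowOrbit G p).Finite) (g : SL(2, ℤ)) :
    ∃ m : ℕ, 0 < m ∧ (Set.range fun k : ℕ => rowSMul ((g ^ m) ^ k) p).Finite := by
  obtain ⟨m, hm, -, hgm⟩ := Subgroup.exists_pow_mem_of_index_ne_zero hG.index_ne_zero g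
  exact ⟨m, hm, h.subset <| Set.range_subset_iff.mpr fun k => ⟨_, pow_mem hgm k, rfl⟩⟩

theorem isOfFinAddOrder_of_rowOrbit_finite {G : Subgroup SL(2, ℤ)} (hG : G.FiniteIndex)
    {p : A × A} (h : (rowOrbit G p).Finite) : IsOfFinAddOrder p.1 ∧ IsOfFinAddOrder p.2 := by
  obtain ⟨m, hm, hT⟩ := exists_finite_range_rowSMul_pow hG h T
  obtain ⟨n, hn, hTt⟩ := exists_finite_range_rowSMul_pow hG h Tᵀ
  refine ⟨.of_nsmul (isOfFinAddOrder_of_finite_range_nsmul_add (y := p.2) ?_) hm.ne',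
    .of_nsmul (isOfFinAddOrder_of_finite_range_nsmul_add (y := p.1) ?_) hn.ne'⟩
  · have hsnd := hT.image Prod.snd
    rw [← Set.range_comp] at hsnd
    simpa [Function.comp_def, ← pow_mul, rowSMul_T_pow, mul_nsmul] using hsnd
  · have hfst := hTt.image Prod.fst
    rw [← Set.range_comp] at hfst
    simpa [Function.comp_def, ← pow_mul, rowSMul_transpose_T_pow, mul_nsmul, add_comm] using hfst

theorem rowOrbit_finite_iff {G : Subgroup SL(2, ℤ)} (hG : G.FiniteIndex) (p : A × A) :
    (rowOrbit G p).Finite ↔ IsOfFinAddOrder p.1 ∧ IsOfFinAddOrder p.2 :=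
  ⟨isOfFinAddOrder_of_rowOrbit_finite hG, fun h => rowOrbit_finite_of_isOfFinAddOrder G h.1 h.2⟩

end RowAction

/-- A point `(r,s) ∈ (ℝ/ℤ)²` has finite orbit under the right action
`(r,s)·g = (a r + c s, b r + d s)` of a finite-index subgroup `G ≤ SL₂(ℤ)`
if and only if `(r,s) ∈ (ℚ/ℤ)²`. -/
theorem stmt3 (G : Subgroup (Matrix.SpecialLinearGroup (Fin 2) ℤ))
    (hG : G.FiniteIndex) (r s : AddCircle (1 : ℝ)) :
    {p : AddCircle (1 : ℝ) × AddCircle (1 : ℝ) |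
        ∃ g : Matrix.SpecialLinearGroup (Fin 2) ℤ, g ∈ G ∧
          p = ((g : Matrix (Fin 2) (Fin 2) ℤ) 0 0 • r + (g : Matrix (Fin 2) (Fin 2) ℤ) 1 0 • s,
               (g : Matrix (Fin 2) (Fin 2) ℤ) 0 1 • r + (g : Matrix (Fin 2) (Fin 2) ℤ) 1 1 • s)}.Finite
      ↔ (∃ q : ℚ, r = ((q : ℝ) : AddCircle (1 : ℝ))) ∧
        (∃ q : ℚ, s = ((q : ℝ) : AddCircle (1 : ℝ))) := by
  have key := rowOrbit_finite_iff hG (r, s)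
  simp only [AddCircle.isOfFinAddOrder_iff_exists_rat, mul_one] at key
  exact key
end

section
/- If f is a holomorphic function on the open unit disk, not identically zero, vanishing to order n at 0, then for all sufficiently small r > 0 the winding number around 0 of the loop t ↦ f(re^{2πit}) equals n. -/
/-- `w` is the winding number around `0` of the nowhere-vanishing loop
`t ↦ g t` (parametrized by `t ∈ [0,1]`): there is a continuous lift `θ` of
the argument (divided by `2π`) along the loop, and `w = θ 1 - θ 0`. -/
def IsWindingNumber (g : ℝ → ℂ) (w : ℝ) : Prop :=
  (∀ t : ℝ, g t ≠ 0) ∧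
  ∃ θ : ℝ → ℝ, Continuous θ ∧
    (∀ t : ℝ, g t = (‖g t‖ : ℂ) *
      Complex.exp (2 * Real.pi * Complex.I * (θ t : ℂ))) ∧
    w = θ 1 - θ 0

/-!
Near `0` write `f z = z ^ n * g z` with `g` analytic and `g 0 ≠ 0`. On a small circle `γ` the
loop `f ∘ γ` is the product of `γ ^ n`, which winds `n` times, the constant `g 0`, and
`g ∘ γ / g 0`, which stays close to `1`, hence in the slit plane, where `arg` is a continuous
lift. Winding numbers add under products, so the total is `n`.
-/

open Complex Filter Topology

namespace IsWindingNumber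

theorem mul {g₁ g₂ : ℝ → ℂ} {w₁ w₂ : ℝ} (h₁ : IsWindingNumber g₁ w₁)
    (h₂ : IsWindingNumber g₂ w₂) : IsWindingNumber (fun t => g₁ t * g₂ t) (w₁ + w₂) := by
  obtain ⟨hne₁, θ₁, hθ₁, hpolar₁, rfl⟩ := h₁
  obtain ⟨hne₂, θ₂, hθ₂, hpolar₂, rfl⟩ := h₂
  refine ⟨fun t => mul_ne_zero (hne₁ t) (hne₂ t), θ₁ + θ₂, hθ₁.add hθ₂, fun t => ?_, by simp only [Pi.add_apply]; ring⟩
  show g₁ t * g₂ t = _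
  conv_lhs => rw [hpolar₁ t, hpolar₂ t]
  simp only [norm_mul, Pi.add_apply, ofReal_add, ofReal_mul, mul_add, exp_add]
  ring

end IsWindingNumber

theorem isWindingNumber_const {c : ℂ} (hc : c ≠ 0) : IsWindingNumber (fun _ => c) 0 := by
  refine ⟨fun _ => hc, fun _ => arg c / (2 * Real.pi), continuous_const, fun _ => ?_, by simp⟩
  have hπ : (Real.pi : ℂ) ≠ 0 := ofReal_ne_zero.2 Real.pi_ne_zero
  conv_lhs => rw [← norm_mul_exp_arg_mul_I c]
  push_cast
  field_simp

theorem isWindingNumber_zero_of_mem_slitPlane {g : ℝ → ℂ} (hg : Continuous g)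
    (hslit : ∀ t, g t ∈ slitPlane) (hperiodic : g 1 = g 0) : IsWindingNumber g 0 := by
  refine ⟨fun t => slitPlane_ne_zero (hslit t), fun t => arg (g t) / (2 * Real.pi),
    continuous_iff_continuousAt.2 fun t =>
      ((continuousAt_arg (hslit t)).comp hg.continuousAt).div_const _,
    fun t => ?_, by simp [hperiodic]⟩
  have hπ : (Real.pi : ℂ) ≠ 0 := ofReal_ne_zero.2 Real.pi_ne_zero
  conv_lhs => rw [← norm_mul_exp_arg_mul_I (g t)]
  push_cast
  field_simp

theorem isWindingNumber_circle_pow {r : ℝ} (hr : 0 < r) (n : ℕ) :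
    IsWindingNumber (fun t : ℝ => ((r : ℂ) * exp (2 * Real.pi * I * t)) ^ n) n := by
  refine ⟨fun t => pow_ne_zero n (mul_ne_zero (ofReal_ne_zero.2 hr.ne') (exp_ne_zero _)),
    fun t => n * t, by fun_prop, fun t => ?_, by simp⟩
  have hnorm : ‖((r : ℂ) * exp (2 * Real.pi * I * t)) ^ n‖ = r ^ n := by
    simp [norm_exp, abs_of_pos hr]
  rw [hnorm]
  simp only [mul_pow, ← exp_nat_mul]
  push_cast
  ring_nf

theorem exists_isWindingNumber_circle_of_eventually_eq_pow_mul {f g : ℂ → ℂ} {n : ℕ}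
    (hg : ∀ᶠ z in 𝓝 0, ContinuousAt g z) (hg0 : g 0 ≠ 0)
    (hfg : ∀ᶠ z in 𝓝 0, f z = z ^ n * g z) :
    ∃ δ > 0, ∀ r : ℝ, 0 < r → r < δ →
      IsWindingNumber (fun t : ℝ => f (r * exp (2 * Real.pi * I * t))) n := by
  have hslit : ∀ᶠ z in 𝓝 0, g z / g 0 ∈ slitPlane :=
    (hg.self_of_nhds.div_const (g 0)).eventually
      (isOpen_slitPlane.mem_nhds (by simp [hg0]))
  obtain ⟨δ, hδ, hnear⟩ := Metric.eventually_nhds_iff.1 (hfg.and (hg.and hslit))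
  refine ⟨δ, hδ, fun r hr hrδ => ?_⟩
  set γ : ℝ → ℂ := fun t => r * exp (2 * Real.pi * I * t)
  have hγ_cont : Continuous γ := by fun_prop
  have hγ_near : ∀ t, dist (γ t) 0 < δ := fun t => by
    simpa [γ, norm_exp, abs_of_pos hr] using hrδ
  have hγ_periodic : γ 1 = γ 0 := by simp [γ]
  have hfactor : (fun t => f (γ t)) = fun t => γ t ^ n * (g 0 * (g (γ t) / g 0)) := by
    ext t
    rw [mul_div_cancel₀ _ hg0, (hnear (hγ_near t)).1]
  rw [hfactor]
  have hquot : IsWindingNumber (fun t => g (γ t) / g 0) 0 :=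
    isWindingNumber_zero_of_mem_slitPlane
      (continuous_iff_continuousAt.2 fun t =>
        ((hnear (hγ_near t)).2.1.comp hγ_cont.continuousAt).div_const _)
      (fun t => (hnear (hγ_near t)).2.2) (by rw [hγ_periodic])
  simpa using (isWindingNumber_circle_pow hr n).mul ((isWindingNumber_const hg0).mul hquot)

/-- If `f` is holomorphic on the open unit disk, not identically zero, vanishing to
order `n` at `0`, then for all sufficiently small `r > 0` the winding number around
`0` of the loop `t ↦ f(re^{2πit})` equals `n`. -/
theorem stmt10 (f : ℂ → ℂ) (hf : DifferentiableOn ℂ f (Metric.ball 0 1))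
    (n : ℕ) (hvanish : ∀ k < n, iteratedDeriv k f 0 = 0)
    (hn : iteratedDeriv n f 0 ≠ 0) :
    ∃ r₀ > 0, r₀ ≤ 1 ∧ ∀ r : ℝ, 0 < r → r < r₀ →
      IsWindingNumber
        (fun t : ℝ => f (r * Complex.exp (2 * Real.pi * Complex.I * (t : ℂ)))) n := by
  have hfa : AnalyticAt ℂ f 0 := hf.analyticAt (Metric.ball_mem_nhds 0 one_pos)
  obtain ⟨g, hg, hg0, hfg⟩ := hfa.analyticOrderAt_eq_natCast.1
    ((analyticOrderAt_eq_nat_iff_iteratedDeriv_eq_zero hfa).2 ⟨hvanish, hn⟩)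
  obtain ⟨δ, hδ, hwind⟩ := exists_isWindingNumber_circle_of_eventually_eq_pow_mul
    (hg.eventually_analyticAt.mono fun _ h => h.continuousAt) hg0 (by simpa using hfg)
  exact ⟨min δ 1, lt_min hδ one_pos, min_le_right _ _,
    fun r hr hrδ => hwind r hr (hrδ.trans_le (min_le_left _ _))⟩
end

section
/- The point P = (1,1) on the elliptic curve E₁: y² = x³ - t x + t over ℚ(t) has infinite order in the group of ℚ(t)-rational points. -/
/-- The elliptic curve `E₁ : y² = x³ - t x + t` over `ℚ(t)`. -/
noncomputable def E₁ : WeierstrassCurve.Affine (RatFunc ℚ) :=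
  { a₁ := 0, a₂ := 0, a₃ := 0, a₄ := -RatFunc.X, a₆ := RatFunc.X }

/-!
If `P = (1, 1)` had finite order, then either its order is even and a multiple of `P` is a
rational point of order two, or its order is odd and `P = 2Q` for a rational point `Q`. A point of
order two has `y = 0`, so its `x` is a root of `x³ - t x + t`; a point with `2Q = P` has, by the
duplication formula, an `x` that is a root of a monic quartic over `ℚ[t]`. Since `ℚ[t]` is
integrally closed, such roots would be polynomials in `t`, and comparing degrees shows that
neither equation has a polynomial solution.
-/

open Polynomial

section AddOrder

variable {G : Type*} [AddMonoid G] {P : G}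

theorem exists_add_self_eq_of_odd_addOrderOf (h : Odd (addOrderOf P)) : ∃ Q : G, Q + Q = P := by
  obtain ⟨m, hm⟩ := h
  refine ⟨(m + 1) • P, ?_⟩
  rw [← add_nsmul, show m + 1 + (m + 1) = addOrderOf P + 1 by omega, succ_nsmul,
    addOrderOf_nsmul_eq_zero, zero_add]

theorem IsOfFinAddOrder.exists_ne_zero_add_self_eq_zero_of_even (hP : IsOfFinAddOrder P)
    (h : Even (addOrderOf P)) : ∃ Q : G, Q ≠ 0 ∧ Q + Q = 0 := by
  obtain ⟨m, hm⟩ := h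
  have hpos := hP.addOrderOf_pos
  refine ⟨m • P, nsmul_ne_zero_of_lt_addOrderOf (by omega) (by omega), ?_⟩
  rw [← add_nsmul, ← hm, addOrderOf_nsmul_eq_zero]

end AddOrder

theorem Polynomial.Monic.aeval_ne_zero_of_forall_eval_ne_zero {R K : Type*} [CommRing R]
    [IsIntegrallyClosed R] [CommRing K] [Algebra R K] [IsFractionRing R K]
    {f : R[X]} (hf : f.Monic) (h : ∀ r : R, f.eval r ≠ 0) (x : K) : aeval x f ≠ 0 := by
  intro hx
  obtain ⟨r, rfl⟩ := IsIntegrallyClosed.isIntegral_iff.mp ⟨f, hf, hx⟩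
  refine h r (IsFractionRing.injective R K ?_)
  rwa [← coe_aeval_eq_eval, ← aeval_algebraMap_apply, map_zero]

namespace E₁

open WeierstrassCurve.Affine

noncomputable def twoTorsionCubic : ℚ[X][X] := X ^ 3 - C X * X + C X

/-- Clearing denominators in `x(2Q) = 1` with the duplication formula and the curve equation
turns it into the vanishing of this quartic at `x(Q)`. -/
noncomputable def halvingQuartic : ℚ[X][X] :=
  X ^ 4 - 4 * X ^ 3 + C (2 * X) * X ^ 2 - C (4 * X) * X + C (X ^ 2 - 4 * X)

lemma monic_twoTorsionCubic : twoTorsionCubic.Monic := by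
  unfold twoTorsionCubic; monicity!

lemma monic_halvingQuartic : halvingQuartic.Monic := by
  unfold halvingQuartic; monicity!

lemma eval_twoTorsionCubic_ne_zero (p : ℚ[X]) : twoTorsionCubic.eval p ≠ 0 := by
  simp only [twoTorsionCubic, eval_add, eval_sub, eval_mul, eval_pow, eval_C, eval_X]
  obtain hd | hd := Nat.eq_zero_or_pos p.natDegree
  · obtain ⟨c, rfl⟩ := natDegree_eq_zero.mp hd
    intro h
    have h0 : c = 0 := by simpa using congrArg (eval 0) h
    have h1 : c ^ 3 - c + 1 = 0 := by simpa using congrArg (eval 1) h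
    rw [h0] at h1
    norm_num at h1
  · have hlt : (X - X * p).natDegree < (p ^ 3).natDegree := by
      rw [natDegree_pow]
      refine Nat.lt_of_le_sub_one (by omega) ?_
      compute_degree
      omega
    refine ne_zero_of_natDegree_gt (n := 0) ?_
    rw [show p ^ 3 - X * p + X = p ^ 3 + (X - X * p) by ring,
      natDegree_add_eq_left_of_natDegree_lt hlt, natDegree_pow]
    omega

lemma eval_halvingQuartic_ne_zero (p : ℚ[X]) : halvingQuartic.eval p ≠ 0 := by
  simp only [halvingQuartic, eval_add, eval_sub, eval_mul, eval_pow, eval_C, eval_X, eval_ofNat]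
  refine ne_zero_of_natDegree_gt (n := 0) ?_
  obtain hd | hd := Nat.eq_zero_or_pos p.natDegree
  · obtain ⟨c, rfl⟩ := natDegree_eq_zero.mp hd
    have : (C c ^ 4 - 4 * C c ^ 3 + 2 * X * C c ^ 2 - 4 * X * C c + (X ^ 2 - 4 * X)).natDegree
        = 2 := by
      compute_degree!
    omega
  · have hlt : (-4 * p ^ 3 + 2 * X * p ^ 2 - 4 * X * p + (X ^ 2 - 4 * X)).natDegree
        < (p ^ 4).natDegree := by
      rw [natDegree_pow]
      refine Nat.lt_of_le_sub_one (by omega) ?_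
      compute_degree
      omega
    rw [show p ^ 4 - 4 * p ^ 3 + 2 * X * p ^ 2 - 4 * X * p + (X ^ 2 - 4 * X)
        = p ^ 4 + (-4 * p ^ 3 + 2 * X * p ^ 2 - 4 * X * p + (X ^ 2 - 4 * X)) by ring,
      natDegree_add_eq_left_of_natDegree_lt hlt, natDegree_pow]
    omega

lemma aeval_twoTorsionCubic (x : RatFunc ℚ) :
    aeval x twoTorsionCubic = x ^ 3 - RatFunc.X * x + RatFunc.X := by
  simp [twoTorsionCubic, RatFunc.algebraMap_X]

lemma aeval_halvingQuartic (x : RatFunc ℚ) :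
    aeval x halvingQuartic = x ^ 4 - 4 * x ^ 3 + 2 * RatFunc.X * x ^ 2 - 4 * RatFunc.X * x
      + (RatFunc.X ^ 2 - 4 * RatFunc.X) := by
  simp [halvingQuartic, RatFunc.algebraMap_X, map_ofNat]

@[simp] lemma a₁_eq : E₁.a₁ = 0 := rfl
@[simp] lemma a₂_eq : E₁.a₂ = 0 := rfl
@[simp] lemma a₃_eq : E₁.a₃ = 0 := rfl
@[simp] lemma a₄_eq : E₁.a₄ = -RatFunc.X := rfl
@[simp] lemma a₆_eq : E₁.a₆ = RatFunc.X := rfl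

lemma equation_iff (x y : RatFunc ℚ) :
    E₁.Equation x y ↔ y ^ 2 = x ^ 3 - RatFunc.X * x + RatFunc.X := by
  rw [WeierstrassCurve.Affine.equation_iff, a₁_eq, a₂_eq, a₃_eq, a₄_eq, a₆_eq]
  ring_nf

lemma negY_eq (x y : RatFunc ℚ) : E₁.negY x y = -y := by
  simp [negY]

lemma nonsingular_one_one : E₁.Nonsingular 1 1 := by
  rw [nonsingular_iff, equation_iff]
  refine ⟨by ring, Or.inr ?_⟩
  norm_num

variable [DecidableEq (RatFunc ℚ)]

lemma eq_zero_of_add_self_eq_zero : ∀ {Q : E₁.Point}, Q + Q = 0 → Q = 0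
  | .zero, _ => rfl
  | .some (x := x) (y := y) hQ, h => by
    have hy : y = -y := by simpa [negY_eq] using add_eq_zero_iff_eq_neg.mp h
    have hy0 : y = 0 := by linear_combination hy / 2
    have hcubic := (equation_iff x y).mp hQ.left
    refine absurd ?_ (monic_twoTorsionCubic.aeval_ne_zero_of_forall_eval_ne_zero
      eval_twoTorsionCubic_ne_zero x)
    rw [aeval_twoTorsionCubic]
    linear_combination -hcubic + y * hy0

lemma add_self_ne_some_one_one {h : E₁.Nonsingular 1 1} : ∀ Q : E₁.Point, Q + Q ≠ .some 1 1 h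
  | .zero => (Point.some_ne_zero h).symm
  | .some (x := x) (y := y) hQ => by
    by_cases hy : y = E₁.negY x y
    · rw [Point.add_self_of_Y_eq hy]
      exact (Point.some_ne_zero h).symm
    rw [Point.add_self_of_Y_ne hy]
    intro hQQ
    have hx := (Point.some.inj hQQ).left
    rw [slope_of_Y_ne rfl hy, negY_eq] at hx
    have hy0 : y ≠ 0 := fun h0 => hy (by rw [negY_eq, h0, neg_zero])
    have hcubic := (equation_iff x y).mp hQ.left
    refine monic_halvingQuartic.aeval_ne_zero_of_forall_eval_ne_zero
      eval_halvingQuartic_ne_zero x ?_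
    rw [aeval_halvingQuartic]
    simp only [addX, a₁_eq, a₂_eq, a₄_eq] at hx
    field_simp at hx
    linear_combination hx + (8 * x + 4) * hcubic

end E₁

open Classical in
/-- The point `P = (1,1)` on `E₁ : y² = x³ - t x + t` over `ℚ(t)` has infinite
order in the group of `ℚ(t)`-rational points. -/
theorem stmt15 :
    E₁.Nonsingular 1 1 ∧
    ∀ h : E₁.Nonsingular 1 1,
      ¬ IsOfFinAddOrder (WeierstrassCurve.Affine.Point.some (h := h)) := by
  refine ⟨E₁.nonsingular_one_one, fun h hP => ?_⟩
  rcases Nat.even_or_odd (addOrderOf (WeierstrassCurve.Affine.Point.some (h := h)))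
    with heven | hodd
  · obtain ⟨Q, hQ, hQQ⟩ := hP.exists_ne_zero_add_self_eq_zero_of_even heven
    exact hQ (E₁.eq_zero_of_add_self_eq_zero hQQ)
  · obtain ⟨Q, hQQ⟩ := exists_add_self_eq_of_odd_addOrderOf hodd
    exact E₁.add_self_ne_some_one_one Q hQQ
end
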